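/- Let R be a finite ring admitting a two-sided generating character χ, i.e., an additive character χ such that every additive character of R equals x ↦ χ(x*r) for some r ∈ R and also equals x ↦ χ(r'*x) for some r' ∈ R (such R are exactly the finite Frobenius rings). Let ω be a normalized homogeneous weight on R. Then for every b ∈ R and every real number t, ∑_{a ∈ R, ω(a) = t} χ(a*b) = ∑_{a ∈ R, ω(a) = t} χ(b*a). In particular, the left and right Krawtchouk coefficients of the homogeneous weight partition coincide, and hence so do its left and right character-theoretic dual partitions. -/

import Mathlib

/-- The principal left ideal generated by `x`, as a set: `{r * x : r ∈ R}`. -/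
def leftOrbit {R : Type*} [Ring R] (x : R) : Set R := {z | ∃ r : R, z = r * x}

/-- `ω` is a normalized homogeneous weight on the finite ring `R`. -/
def IsNormHomWeight {R : Type*} [Ring R] [Finite R] (ω : R → ℝ) : Prop :=
  ω 0 = 0 ∧
  (∀ x y : R, leftOrbit x = leftOrbit y → ω x = ω y) ∧
  (∀ x : R, x ≠ 0 →
    ∑ y ∈ (Set.toFinite (leftOrbit x)).toFinset, ω y
      = ((Set.toFinite (leftOrbit x)).toFinset.card : ℝ))
/-!
A generating character `χ` that is both left and right generating has a Nakayama automorphism: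
a ring automorphism `σ` with `χ (x * y) = χ (y * σ x)`. Any ring automorphism carries left
principal ideals to left principal ideals, so `ω ∘ σ` is again a normalized homogeneous weight,
and by uniqueness of such weights (induction on `R x` ordered by inclusion) `ω ∘ σ = ω`.
Substituting `a ↦ σ a` in the left-hand sum then turns `χ (a * b)` into
`χ (σ a * σ b) = χ (b * a)`, while preserving the level set `{ω = t}`.
-/

open Finset

section LeftOrbit

variable {R S : Type*} [Ring R] [Ring S]

theorem mem_leftOrbit_self (x : R) : x ∈ leftOrbit x := ⟨1, (one_mul x).symm⟩

theorem leftOrbit_subset_of_mem {x y : R} (h : y ∈ leftOrbit x) :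
    leftOrbit y ⊆ leftOrbit x := by
  obtain ⟨r, rfl⟩ := h
  rintro z ⟨s, rfl⟩
  exact ⟨s * r, (mul_assoc s r x).symm⟩

theorem RingEquiv.apply_mem_leftOrbit_apply_iff (σ : S ≃+* R) {x y : S} :
    σ y ∈ leftOrbit (σ x) ↔ y ∈ leftOrbit x := by
  constructor
  · rintro ⟨r, h⟩
    exact ⟨σ.symm r, σ.injective (by simp [h])⟩
  · rintro ⟨r, rfl⟩
    exact ⟨σ r, map_mul σ r x⟩

end LeftOrbit

namespace IsNormHomWeight

variable {R S : Type*} [Ring R] [Finite R] [Ring S] [Finite S]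

theorem comp_ringEquiv {ω : R → ℝ} (hω : IsNormHomWeight ω) (σ : S ≃+* R) :
    IsNormHomWeight (ω ∘ σ) := by
  obtain ⟨hzero, hconst, hsum⟩ := hω
  have hmem (x : S) : ∀ y, y ∈ (Set.toFinite (leftOrbit x)).toFinset ↔
      σ.toEquiv y ∈ (Set.toFinite (leftOrbit (σ x))).toFinset := by
    simp [σ.apply_mem_leftOrbit_apply_iff]
  refine ⟨by simp [hzero], fun x y hxy => hconst _ _ ?_, fun x hx => ?_⟩
  · ext z
    obtain ⟨z, rfl⟩ := σ.surjective z
    simp only [σ.apply_mem_leftOrbit_apply_iff, hxy]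
  · have h := hsum (σ x) ((map_ne_zero_iff σ σ.injective).mpr hx)
    rwa [← sum_equiv σ.toEquiv (hmem x) (f := ω ∘ σ) fun _ _ => rfl,
      ← card_equiv σ.toEquiv (hmem x)] at h

theorem unique {ω₁ ω₂ : R → ℝ} (h₁ : IsNormHomWeight ω₁) (h₂ : IsNormHomWeight ω₂) :
    ω₁ = ω₂ := by
  classical
  suffices ∀ O : Set R, ∀ x, leftOrbit x = O → ω₁ x = ω₂ x from
    funext fun x => this _ x rfl
  intro O
  induction O using WellFoundedLT.induction with
  | _ O ih =>
  rintro x rfl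
  rcases eq_or_ne x 0 with rfl | hx
  · rw [h₁.1, h₂.1]
  set F := (Set.toFinite (leftOrbit x)).toFinset
  have hterm : ∀ y ∈ F,
      ω₁ y - ω₂ y = if leftOrbit y = leftOrbit x then ω₁ x - ω₂ x else 0 := by
    intro y hy
    split_ifs with hyx
    · rw [h₁.2.1 y x hyx, h₂.2.1 y x hyx]
    · have hsub := leftOrbit_subset_of_mem ((Set.Finite.mem_toFinset _).mp hy)
      rw [ih _ (hsub.lt_of_ne hyx) y rfl, sub_self]
  have hsum : ∑ y ∈ F, (ω₁ y - ω₂ y) = 0 := by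
    rw [sum_sub_distrib, h₁.2.2 x hx, h₂.2.2 x hx, sub_self]
  rw [sum_congr rfl hterm, sum_ite, sum_const_zero, add_zero, sum_const, nsmul_eq_mul] at hsum
  have hgen : 0 < #(F.filter fun y => leftOrbit y = leftOrbit x) :=
    card_pos.mpr ⟨x, by simp [F, mem_leftOrbit_self]⟩
  exact sub_eq_zero.mp ((mul_eq_zero.mp hsum).resolve_left (by positivity))

end IsNormHomWeight

namespace AddChar

variable {R : Type*} [Ring R] [Finite R] (χ : AddChar R ℂˣ)

theorem exists_apply_ne_one {G : Type*} [AddCommGroup G] [Finite G] {a : G} (ha : a ≠ 0) :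
    ∃ ψ : AddChar G ℂˣ, ψ a ≠ 1 := by
  obtain ⟨φ, hφ⟩ := CommGroup.exists_apply_ne_one_of_hasEnoughRootsOfUnity
    (Multiplicative G) ℂ (a := Multiplicative.ofAdd a) (by simpa using ha)
  exact ⟨AddChar.toMonoidHomEquiv.symm φ, hφ⟩

theorem eq_of_forall_apply_mul_left_eq
    (hl : ∀ ψ : AddChar R ℂˣ, ∃ r : R, ∀ x : R, ψ x = χ (x * r))
    {x x' : R} (h : ∀ y, χ (x * y) = χ (x' * y)) : x = x' := by
  by_contra hne
  obtain ⟨ψ, hψ⟩ := exists_apply_ne_one (sub_ne_zero.mpr hne)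
  obtain ⟨r, hr⟩ := hl ψ
  exact hψ (by rw [hr, sub_mul, map_sub_eq_div, h, div_self'])

theorem eq_of_forall_apply_mul_right_eq
    (hr : ∀ ψ : AddChar R ℂˣ, ∃ r' : R, ∀ x : R, ψ x = χ (r' * x))
    {x x' : R} (h : ∀ y, χ (y * x) = χ (y * x')) : x = x' := by
  by_contra hne
  obtain ⟨ψ, hψ⟩ := exists_apply_ne_one (sub_ne_zero.mpr hne)
  obtain ⟨r', hr'⟩ := hr ψ
  exact hψ (by rw [hr', mul_sub, map_sub_eq_div, h, div_self'])

/-- The Nakayama automorphism of a two-sided generating character. -/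
theorem exists_ringEquiv_apply_mul_eq
    (hl : ∀ ψ : AddChar R ℂˣ, ∃ r : R, ∀ x : R, ψ x = χ (x * r))
    (hr : ∀ ψ : AddChar R ℂˣ, ∃ r' : R, ∀ x : R, ψ x = χ (r' * x)) :
    ∃ σ : R ≃+* R, ∀ x y, χ (x * y) = χ (y * σ x) := by
  have hσ (x : R) : ∃ r, ∀ y, χ (x * y) = χ (y * r) := hl (χ.compAddMonoidHom (.mulLeft x))
  choose σ hσ using hσ
  have uniq : ∀ {r r' : R}, (∀ y, χ (y * r) = χ (y * r')) → r = r' :=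
    eq_of_forall_apply_mul_right_eq χ hr
  let f : R →+* R :=
    { toFun := σ
      map_one' := uniq fun y => by rw [← hσ, one_mul, mul_one]
      map_mul' := fun x x' => uniq fun y => by
        rw [← hσ, mul_assoc, hσ, mul_assoc, hσ, mul_assoc]
      map_zero' := uniq fun y => by rw [← hσ, zero_mul, mul_zero]
      map_add' := fun x x' => uniq fun y => by
        rw [← hσ, mul_add, map_add_eq_mul, ← hσ, ← hσ, add_mul, map_add_eq_mul] }
  have hinj : Function.Injective f := fun x x' (h : σ x = σ x') =>
    eq_of_forall_apply_mul_left_eq χ hl fun y => by rw [hσ x, hσ x', h]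
  exact ⟨RingEquiv.ofBijective f (Finite.injective_iff_bijective.mp hinj), hσ⟩

end AddChar

theorem homogeneous_weight_krawtchouk_left_eq_right
    {R : Type*} [Ring R] [Finite R]
    (χ : AddChar R ℂˣ)
    (hl : ∀ ψ : AddChar R ℂˣ, ∃ r : R, ∀ x : R, ψ x = χ (x * r))
    (hr : ∀ ψ : AddChar R ℂˣ, ∃ r' : R, ∀ x : R, ψ x = χ (r' * x))
    (ω : R → ℝ) (hω : IsNormHomWeight ω) (b : R) (t : ℝ) :
    ∑ a ∈ (Set.toFinite {a : R | ω a = t}).toFinset, ((χ (a * b) : ℂˣ) : ℂ)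
      = ∑ a ∈ (Set.toFinite {a : R | ω a = t}).toFinset, ((χ (b * a) : ℂˣ) : ℂ) := by
  obtain ⟨σ, hσ⟩ := χ.exists_ringEquiv_apply_mul_eq hl hr
  have hωσ : ∀ a, ω (σ a) = ω a := congrFun ((hω.comp_ringEquiv σ).unique hω)
  have hχσ : ∀ a, χ (σ a) = χ a := fun a => by rw [← one_mul (σ a), ← hσ, mul_one]
  calc ∑ a ∈ (Set.toFinite {a : R | ω a = t}).toFinset, ((χ (a * b) : ℂˣ) : ℂ)
      = ∑ a ∈ (Set.toFinite {a : R | ω a = t}).toFinset, ((χ (a * σ b) : ℂˣ) : ℂ) :=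
        sum_equiv σ.toEquiv (by simp [hωσ]) fun a _ => by simp [← map_mul, hχσ]
    _ = _ := by simp only [hσ b]
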